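/- arXiv:2509.25136 — 2 statements merged into one kernel-verified Lean document; each statement's English description precedes it below -/
import Mathlib

section
/- Let X be an N×I real matrix and M an I×I matrix such that Mᵀ Xᵀ X M = N Ī_R where R = rank(X), and such that the column space of M equals the row space of X. Then X M M⁺ = X, where M⁺ is the Moore–Penrose pseudoinverse of M. -/
open Matrix

/-- `Ī_R`: the `I×I` matrix equal to the identity on the first `R` coordinates and zero
elsewhere. -/
def Ibar (I R : ℕ) : Matrix (Fin I) (Fin I) ℝ :=
  Matrix.of fun i j => if i = j ∧ (i : ℕ) < R then (1 : ℝ) else 0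

/-- `Mp` is the Moore–Penrose pseudoinverse of `M` (the four Penrose conditions). -/
def IsMoorePenrose {I : ℕ} (M Mp : Matrix (Fin I) (Fin I) ℝ) : Prop :=
  M * Mp * M = M ∧ Mp * M * Mp = Mp ∧ (M * Mp)ᵀ = M * Mp ∧ (Mp * M)ᵀ = Mp * M

theorem Matrix.mul_mul_eq_of_range_mulVecLin_le {m n k R : Type*} [Fintype m] [Fintype n]
    [Fintype k] [CommSemiring R] {A : Matrix m n R} {G : Matrix n m R} {B : Matrix m k R}
    (hG : A * G * A = A) (hB : LinearMap.range B.mulVecLin ≤ LinearMap.range A.mulVecLin) :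
    A * G * B = B := by
  refine ext_iff_mulVec.mpr fun v => ?_
  obtain ⟨w, hw⟩ := hB ⟨v, rfl⟩
  rw [mulVecLin_apply, mulVecLin_apply] at hw
  rw [← mulVec_mulVec, ← hw, mulVec_mulVec, hG]

theorem mul_whitening_mul_pinv_general {N I : ℕ}
    (X : Matrix (Fin N) (Fin I) ℝ)
    (M Mp : Matrix (Fin I) (Fin I) ℝ)
    (hrange : LinearMap.range M.mulVecLin = LinearMap.range Xᵀ.mulVecLin)
    (hMp : IsMoorePenrose M Mp) :
    X * M * Mp = X := by
  obtain ⟨hMMpM, -, hMMp_symm, -⟩ := hMp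
  have hXt : M * Mp * Xᵀ = Xᵀ := mul_mul_eq_of_range_mulVecLin_le hMMpM hrange.ge
  calc X * M * Mp = (M * Mp * Xᵀ)ᵀ := by
        rw [transpose_mul, hMMp_symm, transpose_transpose, Matrix.mul_assoc]
    _ = X := by rw [hXt, transpose_transpose]

theorem mul_whitening_mul_pinv {N I R : ℕ}
    (X : Matrix (Fin N) (Fin I) ℝ) (hR : X.rank = R)
    (M Mp : Matrix (Fin I) (Fin I) ℝ)
    (hW : Mᵀ * (Xᵀ * X) * M = (N : ℝ) • Ibar I R)
    (hrange : LinearMap.range M.mulVecLin = LinearMap.range Xᵀ.mulVecLin)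
    (hMp : IsMoorePenrose M Mp) :
    X * M * Mp = X :=
  mul_whitening_mul_pinv_general X M Mp hrange hMp
end

section
/- Let X be an N×I real matrix of rank R and let M be an uncentered whitening matrix for X (i.e., Mᵀ Xᵀ X M = N Ī_R and range(M) = row(X)). Let W be an I×O real matrix, and let σ_1 ≥ σ_2 ≥ ... ≥ σ_U be the singular values of M⁺ W. Then for any P with 0 ≤ P ≤ U, ‖X W − X M T_P(M⁺ W)‖_F² = N · Σ_{i=P+1}^{U} σ_i², where T_P denotes truncation to the best rank-P approximation via SVD. -/
open Matrix

/-- Squared Frobenius norm of a matrix. -/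
def frobSq {m n : Type*} [Fintype m] [Fintype n] (A : Matrix m n ℝ) : ℝ :=
  ∑ i, ∑ j, (A i j) ^ 2

/-- Rectangular "diagonal" matrix with entries `s 0, s 1, …` on the main diagonal. -/
def rectDiag (I O : ℕ) (s : ℕ → ℝ) : Matrix (Fin I) (Fin O) ℝ :=
  Matrix.of fun i j => if (i : ℕ) = (j : ℕ) then s (i : ℕ) else 0

/-
Put `A = X M`. Since `range M = row X` and `M M⁺ M = M`, the matrix `M M⁺` is the orthogonal
projector onto `row X`, so `X = A M⁺` and the residual is `A U D Vᵀ`, where `D` keeps the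
singular values of index `≥ P`. The whitening identity `AᵀA = N Ī_R` gives
`‖A B‖² = N ‖B‖²` whenever `Ī_R B = B`; this holds for `B = U D Vᵀ` because the columns of `M`
past `R` vanish (they lie in `row X` and are killed by `X`), so `Ī_R` fixes the range of `M⁺`.
Orthogonal invariance of the Frobenius norm then leaves `N ‖D‖²`.
-/

lemma frobSq_eq_trace {m n : Type*} [Fintype m] [Fintype n] (A : Matrix m n ℝ) :
    frobSq A = (Aᵀ * A).trace := by
  simp only [frobSq, trace, diag_apply, mul_apply, transpose_apply, sq]
  exact Finset.sum_comm

lemma frobSq_mul_of_transpose_mul_self_eq_smul {l m n : Type*} [Fintype l] [Fintype m]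
    [Fintype n] {A : Matrix l m ℝ} {B : Matrix m n ℝ} {E : Matrix m m ℝ} {c : ℝ}
    (hA : Aᵀ * A = c • E) (hB : E * B = B) :
    frobSq (A * B) = c * frobSq B := by
  rw [frobSq_eq_trace, frobSq_eq_trace, transpose_mul, Matrix.mul_assoc, ← Matrix.mul_assoc Aᵀ,
    hA, smul_mul, hB, Matrix.mul_smul, trace_smul, smul_eq_mul]

lemma frobSq_mul_mul_transpose {m n p q : Type*} [Fintype m] [Fintype n] [Fintype p]
    [Fintype q] [DecidableEq n] [DecidableEq q] {U : Matrix m n ℝ} {V : Matrix p q ℝ}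
    (hU : Uᵀ * U = 1) (hV : Vᵀ * V = 1) (D : Matrix n q ℝ) :
    frobSq (U * D * Vᵀ) = frobSq D := by
  have hexpand : (U * D * Vᵀ)ᵀ * (U * D * Vᵀ) = V * (Dᵀ * D) * Vᵀ := by
    simp only [transpose_mul, transpose_transpose, Matrix.mul_assoc]
    rw [← Matrix.mul_assoc Uᵀ, hU, Matrix.one_mul]
  rw [frobSq_eq_trace, frobSq_eq_trace, hexpand, trace_mul_comm, ← Matrix.mul_assoc, hV,
    Matrix.one_mul]

lemma eq_zero_of_mem_range_transpose_of_mulVec_eq_zero {m n : Type*} [Fintype m] [Fintype n]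
    {X : Matrix m n ℝ} {v : n → ℝ} (hv : v ∈ LinearMap.range Xᵀ.mulVecLin) (hXv : X *ᵥ v = 0) :
    v = 0 := by
  obtain ⟨u, rfl⟩ := hv
  rw [mulVecLin_apply, mulVec_transpose] at hXv ⊢
  rw [← dotProduct_self_eq_zero, ← dotProduct_mulVec, hXv, dotProduct_zero]

namespace IsMoorePenrose

variable {I : ℕ} {M Mp : Matrix (Fin I) (Fin I) ℝ}

lemma mul_mulVec_of_mem_range (hMp : IsMoorePenrose M Mp) {v : Fin I → ℝ}
    (hv : v ∈ LinearMap.range M.mulVecLin) : (M * Mp) *ᵥ v = v := by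
  obtain ⟨w, rfl⟩ := hv
  simp only [mulVecLin_apply, mulVec_mulVec, hMp.1]

lemma mul_mul_eq_of_range_transpose_le {m : Type*} [Fintype m] (hMp : IsMoorePenrose M Mp)
    {X : Matrix m (Fin I) ℝ} (hX : LinearMap.range Xᵀ.mulVecLin ≤ LinearMap.range M.mulVecLin) :
    X * M * Mp = X := by
  have hproj : M * Mp * Xᵀ = Xᵀ := ext_iff_mulVec.2 fun v => by
    rw [← mulVec_mulVec]
    exact hMp.mul_mulVec_of_mem_range (hX ⟨v, rfl⟩)
  have h := congrArg transpose hproj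
  rwa [transpose_mul, transpose_transpose, hMp.2.2.1, ← Matrix.mul_assoc] at h

lemma transpose_mul_eq_of_mul_eq (hMp : IsMoorePenrose M Mp) {E : Matrix (Fin I) (Fin I) ℝ}
    (hE : M * E = M) : Eᵀ * Mp = Mp := by
  have hMp_eq : Mp = Mᵀ * Mpᵀ * Mp := by
    conv_lhs => rw [← hMp.2.1, ← hMp.2.2.2, transpose_mul]
  rw [hMp_eq, ← Matrix.mul_assoc, ← Matrix.mul_assoc, ← transpose_mul, hE]

end IsMoorePenrose

lemma Ibar_eq_diagonal (I R : ℕ) :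
    Ibar I R = diagonal fun i : Fin I => if (i : ℕ) < R then (1 : ℝ) else 0 := by
  ext i j
  by_cases h : i = j <;> simp [Ibar, diagonal, h]

lemma Ibar_transpose (I R : ℕ) : (Ibar I R)ᵀ = Ibar I R := by
  rw [Ibar_eq_diagonal, diagonal_transpose]

lemma Ibar_mulVec_single_of_le {I R : ℕ} {j : Fin I} (hj : R ≤ j) :
    Ibar I R *ᵥ Pi.single j 1 = 0 := by
  simp [Ibar_eq_diagonal, not_lt.2 hj]

lemma mul_Ibar_eq_self_of_transpose_mul_mul_eq {m : Type*} [Fintype m] {I R : ℕ}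
    {X : Matrix m (Fin I) ℝ} {M : Matrix (Fin I) (Fin I) ℝ} {c : ℝ}
    (hW : Mᵀ * (Xᵀ * X) * M = c • Ibar I R)
    (hrange : LinearMap.range M.mulVecLin ≤ LinearMap.range Xᵀ.mulVecLin) :
    M * Ibar I R = M := by
  have hcol : ∀ j : Fin I, R ≤ j → M *ᵥ Pi.single j 1 = 0 := by
    intro j hj
    have hker : Pi.single j 1 ∈ LinearMap.ker ((X * M)ᵀ * (X * M)).mulVecLin := by
      rw [LinearMap.mem_ker, mulVecLin_apply, transpose_mul, Matrix.mul_assoc,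
        ← Matrix.mul_assoc Xᵀ, ← Matrix.mul_assoc, hW, smul_mulVec, Ibar_mulVec_single_of_le hj,
        smul_zero]
    rw [ker_mulVecLin_transpose_mul_self, LinearMap.mem_ker, mulVecLin_apply,
      ← mulVec_mulVec] at hker
    exact eq_zero_of_mem_range_transpose_of_mulVec_eq_zero (hrange ⟨_, rfl⟩) hker
  ext i j
  rw [Ibar_eq_diagonal, mul_diagonal]
  by_cases hj : (j : ℕ) < R
  · simp [hj]
  · simpa [hj] using (congrFun (hcol j (not_lt.1 hj)) i).symm

lemma rectDiag_sub (I O : ℕ) (s t : ℕ → ℝ) :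
    rectDiag I O s - rectDiag I O t = rectDiag I O (s - t) := by
  ext i j
  simp only [rectDiag, Matrix.sub_apply, of_apply, Pi.sub_apply]
  split_ifs <;> simp

lemma rectDiag_mul_diagonal (I O : ℕ) (s c : ℕ → ℝ) :
    rectDiag I O s * diagonal (fun j : Fin O => c j) = rectDiag I O (s * c) := by
  ext i j
  simp only [rectDiag, mul_diagonal, of_apply, Pi.mul_apply]
  split_ifs with h <;> simp [h]

lemma frobSq_rectDiag (I O : ℕ) (s : ℕ → ℝ) :
    frobSq (rectDiag I O s) = ∑ k ∈ Finset.range (min I O), s k ^ 2 := by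
  have hrow (i : ℕ) : ∑ j : Fin O, (if i = j then s i else 0) ^ 2
      = if i ∈ Finset.range O then s i ^ 2 else 0 := by
    simp only [ite_pow, zero_pow two_ne_zero]
    rw [Fin.sum_univ_eq_sum_range (fun j => if i = j then s i ^ 2 else 0), Finset.sum_ite_eq]
  have hfilter : (Finset.range I).filter (· ∈ Finset.range O) = Finset.range (min I O) := by
    ext k
    simp only [Finset.mem_filter, Finset.mem_range]
    omega
  simp only [frobSq, rectDiag, of_apply, hrow]
  rw [Fin.sum_univ_eq_sum_range (fun i => if i ∈ Finset.range O then s i ^ 2 else 0),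
    ← Finset.sum_filter, hfilter]

lemma sum_range_sq_mul_ite_le (m P : ℕ) (s : ℕ → ℝ) :
    ∑ k ∈ Finset.range m, (s k * if P ≤ k then 1 else 0) ^ 2 = ∑ k ∈ Finset.Ico P m, s k ^ 2 := by
  have hIco : (Finset.range m).filter (P ≤ ·) = Finset.Ico P m := by
    ext k
    simp only [Finset.mem_filter, Finset.mem_range, Finset.mem_Ico]
    omega
  simp only [mul_ite, mul_one, mul_zero, ite_pow, zero_pow two_ne_zero]
  rw [← Finset.sum_filter, hIco]

theorem activation_aware_distortion_general {N I O R : ℕ}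
    (X : Matrix (Fin N) (Fin I) ℝ)
    (M Mp : Matrix (Fin I) (Fin I) ℝ)
    (hW : Mᵀ * (Xᵀ * X) * M = (N : ℝ) • Ibar I R)
    (hrange : LinearMap.range M.mulVecLin = LinearMap.range Xᵀ.mulVecLin)
    (hMp : IsMoorePenrose M Mp)
    (W : Matrix (Fin I) (Fin O) ℝ)
    -- an SVD `Mp * W = U Σ Vmᵀ` with nonincreasing nonnegative singular values `s`
    (U : Matrix (Fin I) (Fin I) ℝ) (Vm : Matrix (Fin O) (Fin O) ℝ) (s : ℕ → ℝ)
    (hU : Uᵀ * U = 1) (hVm : Vmᵀ * Vm = 1)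
    (hSVD : Mp * W = U * rectDiag I O s * Vmᵀ)
    (P : ℕ) :
    frobSq (X * W - X * M * (U * rectDiag I O (fun i => if i < P then s i else 0) * Vmᵀ))
      = (N : ℝ) * ∑ i ∈ Finset.Ico P (min I O), (s i) ^ 2 := by
  set c : ℕ → ℝ := fun i => if P ≤ i then 1 else 0
  have htail : rectDiag I O s - rectDiag I O (fun i => if i < P then s i else 0)
      = rectDiag I O (s * c) := by
    rw [rectDiag_sub]
    congr 1
    funext i
    by_cases hi : i < P <;> simp [c, hi, not_lt.1]
  have hXW : X * W = X * M * (U * rectDiag I O s * Vmᵀ) := by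
    rw [← hSVD, ← Matrix.mul_assoc, hMp.mul_mul_eq_of_range_transpose_le hrange.ge]
  have hIbar_Mp : Ibar I R * Mp = Mp := by
    simpa only [Ibar_transpose] using
      hMp.transpose_mul_eq_of_mul_eq (mul_Ibar_eq_self_of_transpose_mul_mul_eq hW hrange.le)
  have hUS : U * rectDiag I O s = Mp * W * Vm := by
    rw [hSVD, Matrix.mul_assoc _ Vmᵀ, hVm, Matrix.mul_one]
  have hIbar_tail :
      Ibar I R * (U * rectDiag I O (s * c) * Vmᵀ) = U * rectDiag I O (s * c) * Vmᵀ := by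
    simp only [← rectDiag_mul_diagonal, ← Matrix.mul_assoc, hUS, hIbar_Mp]
  have hXM : (X * M)ᵀ * (X * M) = (N : ℝ) • Ibar I R := by
    rw [← hW, transpose_mul]
    simp only [Matrix.mul_assoc]
  rw [hXW, ← Matrix.mul_sub, ← Matrix.sub_mul, ← Matrix.mul_sub, htail,
    frobSq_mul_of_transpose_mul_self_eq_smul hXM hIbar_tail, frobSq_mul_mul_transpose hU hVm,
    frobSq_rectDiag, Pi.mul_def, sum_range_sq_mul_ite_le]

theorem activation_aware_distortion {N I O R : ℕ}
    (X : Matrix (Fin N) (Fin I) ℝ) (hR : X.rank = R)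
    (M Mp : Matrix (Fin I) (Fin I) ℝ)
    (hW : Mᵀ * (Xᵀ * X) * M = (N : ℝ) • Ibar I R)
    (hrange : LinearMap.range M.mulVecLin = LinearMap.range Xᵀ.mulVecLin)
    (hMp : IsMoorePenrose M Mp)
    (W : Matrix (Fin I) (Fin O) ℝ)
    -- an SVD `Mp * W = U Σ Vmᵀ` with nonincreasing nonnegative singular values `s`
    (U : Matrix (Fin I) (Fin I) ℝ) (Vm : Matrix (Fin O) (Fin O) ℝ) (s : ℕ → ℝ)
    (hU : Uᵀ * U = 1) (hVm : Vmᵀ * Vm = 1)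
    (hs0 : ∀ i, 0 ≤ s i) (hsmono : ∀ i j : ℕ, i ≤ j → s j ≤ s i)
    (hszero : ∀ i, min I O ≤ i → s i = 0)
    (hSVD : Mp * W = U * rectDiag I O s * Vmᵀ)
    (P : ℕ) (hP : P ≤ min I O) :
    frobSq (X * W - X * M * (U * rectDiag I O (fun i => if i < P then s i else 0) * Vmᵀ))
      = (N : ℝ) * ∑ i ∈ Finset.Ico P (min I O), (s i) ^ 2 :=
  activation_aware_distortion_general X M Mp hW hrange hMp W U Vm s hU hVm hSVD P
end
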